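/- Let G be any finite simple graph and let n be a positive integer. Then N(G×P_n) = Σ_{k=1}^{n} (n−k+1)·s_k, where s_k denotes the number of connected sets of G×P_k that intersect every one of the k columns of G×P_k. -/

import Mathlib

open SimpleGraph Finset
open scoped Classical

/-- A connected set of a graph: a nonempty vertex subset inducing a connected subgraph. -/
def IsConnSet {V : Type*} (G : SimpleGraph V) (C : Finset V) : Prop :=
  C.Nonempty ∧ (G.induce (C : Set V)).Connected

/-- `N(G)`: the number of connected sets of `G`. -/
noncomputable def numConnSets {V : Type*} (G : SimpleGraph V) : ℕ :=
  {C : Finset V | IsConnSet G C}.ncard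
/-- `s_k`: the number of connected sets of `G×P_k` intersecting every one of its `k`
columns. -/
noncomputable def sFull {V : Type*} (G : SimpleGraph V) (k : ℕ) : ℕ :=
  {C : Finset (V × Fin k) | IsConnSet (G □ pathGraph k) C ∧
    ∀ j : Fin k, (C.filter (fun p => p.2 = j)).Nonempty}.ncard

/-!
The columns met by a connected set of `G × P_n` form an interval `[a, a + k)`, because along a
walk the column index changes by at most one per step. Translating by `a` columns identifies the
connected sets with column set exactly `[a, a + k)` with the connected sets of `G × P_k` that meet
every column, and for each `k` there are `n - k + 1` choices of `a`.
-/

namespace SimpleGraph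

variable {V W V' W' : Type*} {G : SimpleGraph V} {H : SimpleGraph W}
  {G' : SimpleGraph V'} {H' : SimpleGraph W'}

def Embedding.boxProdMap (f : G ↪g G') (g : H ↪g H') : (G □ H) ↪g (G' □ H') where
  toEmbedding := f.toEmbedding.prodMap g.toEmbedding
  map_rel_iff' := by
    simp [boxProd_adj, f.map_adj_iff, g.map_adj_iff, f.injective.eq_iff, g.injective.eq_iff]

def pathGraphShift (a : ℕ) {k n : ℕ} (h : a + k ≤ n) : pathGraph k ↪g pathGraph n where
  toFun j := ⟨a + j, by omega⟩
  inj' i j hij := Fin.ext (by simpa using hij)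
  map_rel_iff' {i j} := by
    change (pathGraph n).Adj ⟨a + i, _⟩ ⟨a + j, _⟩ ↔ _
    simp only [pathGraph_adj]
    omega

theorem Walk.exists_mem_support_eq_of_le_of_le (f : V → ℕ)
    (hf : ∀ ⦃u v⦄, G.Adj u v → f v ≤ f u + 1) {u v : V} (w : G.Walk u v) {j : ℕ}
    (hu : f u ≤ j) (hv : j ≤ f v) : ∃ x ∈ w.support, f x = j := by
  induction w with
  | nil => exact ⟨_, Walk.start_mem_support _, by omega⟩
  | @cons u u' v hadj w ih =>
    by_cases hj : f u' ≤ j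
    · obtain ⟨x, hx, hxj⟩ := ih hj hv
      exact ⟨x, List.mem_cons_of_mem _ hx, hxj⟩
    · exact ⟨u, Walk.start_mem_support _, by have := hf hadj; omega⟩

end SimpleGraph

theorem isConnSet_map_iff {V W : Type*} {G : SimpleGraph V} {H : SimpleGraph W}
    (f : G ↪g H) (C : Finset V) : IsConnSet H (C.map f.toEmbedding) ↔ IsConnSet G C := by
  let e : G.induce (C : Set V) ≃g H.induce (C.map f.toEmbedding : Set W) :=
    { toEquiv := (Equiv.Set.image f _ f.injective).trans (Equiv.setCongr (by simp))
      map_rel_iff' := f.map_adj_iff }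
  simp only [IsConnSet, e.connected_iff, map_nonempty]

theorem numConnSets_eq_card {V : Type*} [Fintype V] (G : SimpleGraph V) :
    numConnSets G = #{C : Finset V | IsConnSet G C} := by
  rw [numConnSets, Set.ncard_eq_toFinset_card', Set.toFinset_ofPred]

section Columns

variable {V : Type*}

def columns {n : ℕ} (D : Finset (V × Fin n)) : Finset ℕ := D.image fun p => (p.2 : ℕ)

theorem columns_subset_range {n : ℕ} (D : Finset (V × Fin n)) : columns D ⊆ range n := by
  intro j hj
  obtain ⟨p, -, rfl⟩ := mem_image.mp hj
  exact mem_range.mpr p.2.isLt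

theorem columns_eq_range_iff {k : ℕ} (C : Finset (V × Fin k)) :
    columns C = range k ↔ ∀ j : Fin k, (C.filter (fun p => p.2 = j)).Nonempty := by
  simp only [Finset.Nonempty, mem_filter]
  refine ⟨fun h j => ?_, fun h => (columns_subset_range C).antisymm fun j hj => ?_⟩
  · obtain ⟨p, hp, hpj⟩ := mem_image.mp (h ▸ mem_range.mpr j.isLt :
      (j : ℕ) ∈ columns C)
    exact ⟨p, hp, Fin.ext hpj⟩
  · obtain ⟨p, hp, hpj⟩ := h ⟨j, mem_range.mp hj⟩
    exact mem_image.mpr ⟨p, hp, by rw [hpj]⟩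

theorem sFull_eq_card [Fintype V] (G : SimpleGraph V) (k : ℕ) :
    sFull G k =
      #{C : Finset (V × Fin k) | IsConnSet (G □ pathGraph k) C ∧ columns C = range k} := by
  simp_rw [sFull, columns_eq_range_iff]
  rw [Set.ncard_eq_toFinset_card', Set.toFinset_ofPred]

theorem boxProd_pathGraph_adj_col_le {G : SimpleGraph V} {n : ℕ} {p q : V × Fin n}
    (h : (G □ pathGraph n).Adj p q) : (q.2 : ℕ) ≤ p.2 + 1 := by
  rcases boxProd_adj.mp h with ⟨-, hcol⟩ | ⟨hcol, -⟩
  · rw [hcol]; omega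
  · rw [pathGraph_adj] at hcol; omega

theorem IsConnSet.columns_eq_Ico {G : SimpleGraph V} {n : ℕ} {D : Finset (V × Fin n)}
    (hD : IsConnSet (G □ pathGraph n) D) :
    ∃ a k, 0 < k ∧ a + k ≤ n ∧ columns D = Ico a (a + k) := by
  have hne : (columns D).Nonempty := hD.1.image _
  obtain ⟨u, hu, hua⟩ := mem_image.mp ((columns D).min'_mem hne)
  obtain ⟨v, hv, hvb⟩ := mem_image.mp ((columns D).max'_mem hne)
  have hab := (columns D).min'_le _ ((columns D).max'_mem hne)
  set a := (columns D).min' hne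
  set b := (columns D).max' hne
  refine ⟨a, b - a + 1, by omega, by have := v.2.isLt; omega, ?_⟩
  ext j
  rw [mem_Ico]
  refine ⟨fun hj => ⟨(columns D).min'_le j hj, by have := (columns D).le_max' j hj; omega⟩,
    fun hj => ?_⟩
  have hstep : ∀ ⦃x y : (D : Set (V × Fin n))⦄, ((G □ pathGraph n).induce D).Adj x y →
      ((y : V × Fin n).2 : ℕ) ≤ (x : V × Fin n).2 + 1 :=
    fun _ _ h => boxProd_pathGraph_adj_col_le h
  obtain ⟨w⟩ := hD.2.preconnected ⟨u, hu⟩ ⟨v, hv⟩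
  obtain ⟨x, -, hx⟩ := w.exists_mem_support_eq_of_le_of_le _ hstep (j := j)
    (show (u.2 : ℕ) ≤ j by omega) (show j ≤ (v.2 : ℕ) by omega)
  exact mem_image.mpr ⟨x, x.2, hx⟩

end Columns

section Shift

variable {V : Type*} (G : SimpleGraph V) {k n : ℕ}

def columnShift (a : ℕ) (h : a + k ≤ n) : (G □ pathGraph k) ↪g (G □ pathGraph n) :=
  Embedding.boxProdMap Embedding.refl (pathGraphShift a h)

theorem columnShift_apply (a : ℕ) (h : a + k ≤ n) (p : V × Fin k) :
    columnShift G a h p = (p.1, ⟨a + p.2, by omega⟩) :=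
  rfl

theorem columns_map_columnShift (a : ℕ) (h : a + k ≤ n) (C : Finset (V × Fin k)) :
    columns (C.map (columnShift G a h).toEmbedding) = (columns C).image (a + ·) := by
  simp only [columns, map_eq_image, image_image]
  rfl

theorem card_isConnSet_columns_eq_Ico [Fintype V] (a : ℕ) (h : a + k ≤ n) :
    #{D : Finset (V × Fin n) | IsConnSet (G □ pathGraph n) D ∧ columns D = Ico a (a + k)} =
      sFull G k := by
  have hfull : (range k).image (a + ·) = Ico a (a + k) := by
    rw [range_eq_Ico, image_add_left_Ico, add_zero]
  rw [sFull_eq_card, eq_comm]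
  refine card_bij (fun C _ => C.map (columnShift G a h).toEmbedding) ?_
    (fun C _ C' _ hCC' => map_injective _ hCC') ?_
  · intro C hC
    simp only [mem_filter, mem_univ, true_and] at hC ⊢
    exact ⟨(isConnSet_map_iff _ C).mpr hC.1, by rw [columns_map_columnShift, hC.2, hfull]⟩
  · intro D hD
    simp only [mem_filter, mem_univ, true_and] at hD
    obtain ⟨C, -, rfl⟩ : ∃ C ⊆ univ, D = C.map (columnShift G a h).toEmbedding := by
      refine subset_map_iff.mp fun p hp => ?_
      have hp' : (p.2 : ℕ) ∈ Ico a (a + k) := hD.2 ▸ mem_image_of_mem _ hp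
      rw [mem_Ico] at hp'
      refine mem_map.mpr ⟨(p.1, ⟨p.2 - a, by omega⟩), mem_univ _, ?_⟩
      rw [RelEmbedding.coe_toEmbedding, columnShift_apply]
      exact Prod.ext rfl (Fin.ext (by simp only; omega))
    refine ⟨C, ?_, rfl⟩
    simp only [mem_filter, mem_univ, true_and]
    refine ⟨(isConnSet_map_iff _ C).mp hD.1, image_injective (add_right_injective a) ?_⟩
    rw [← columns_map_columnShift G a h, hD.2, hfull]

end Shift

theorem Nat.eq_of_Ico_add_eq_Ico_add {a a' k k' : ℕ} (hk : 0 < k) (hk' : 0 < k')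
    (h : Ico a (a + k) = Ico a' (a' + k')) : a = a' ∧ k = k' := by
  have hcard := congrArg card h
  have ha : a ∈ Ico a' (a' + k') := h ▸ mem_Ico.mpr ⟨le_rfl, by omega⟩
  have ha' : a' ∈ Ico a (a + k) := h ▸ mem_Ico.mpr ⟨le_rfl, by omega⟩
  simp only [Nat.card_Ico, mem_Ico] at hcard ha ha'
  omega

theorem statement6_general {V : Type*} [Fintype V] (G : SimpleGraph V) (n : ℕ) :
    numConnSets (G □ pathGraph n) =
      ∑ k ∈ Finset.Icc 1 n, (n - k + 1) * sFull G k := by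
  set spans := (Icc 1 n).sigma fun k => range (n - k + 1)
  have hmaps : ∀ D ∈ ({D | IsConnSet (G □ pathGraph n) D} : Finset (Finset (V × Fin n))),
      columns D ∈ spans.image fun s => Ico s.2 (s.2 + s.1) := by
    intro D hD
    obtain ⟨a, k, hk, hak, hcol⟩ := (mem_filter.mp hD).2.columns_eq_Ico
    refine mem_image.mpr ⟨⟨k, a⟩, ?_, hcol.symm⟩
    simp only [spans, mem_sigma, mem_Icc, mem_range]
    omega
  have hinj : Set.InjOn (fun s : (_ : ℕ) × ℕ => Ico s.2 (s.2 + s.1)) spans := by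
    rintro ⟨k, a⟩ hs ⟨k', a'⟩ hs' h
    simp only [spans, coe_sigma, Set.mem_sigma_iff, coe_Icc, Set.mem_Icc] at hs hs'
    obtain ⟨rfl, rfl⟩ := Nat.eq_of_Ico_add_eq_Ico_add (a := a) (k := k) (a' := a') (k' := k')
      (by omega) (by omega) h
    rfl
  rw [numConnSets_eq_card, card_eq_sum_card_fiberwise hmaps, sum_image hinj, sum_sigma]
  refine sum_congr rfl fun k hk => ?_
  rw [mem_Icc] at hk
  simp only [filter_filter]
  rw [sum_congr rfl fun a ha => card_isConnSet_columns_eq_Ico G a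
    (by rw [mem_range] at ha; omega), sum_const, card_range, smul_eq_mul]

/-- For any finite simple graph `G` and `n ≥ 1`,
`N(G×P_n) = Σ_{k=1}^{n} (n−k+1)·s_k`. -/
theorem statement6 {V : Type*} [Fintype V] (G : SimpleGraph V) (n : ℕ) (hn : 0 < n) :
    numConnSets (G □ pathGraph n) =
      ∑ k ∈ Finset.Icc 1 n, (n - k + 1) * sFull G k :=
  statement6_general G n
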